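/- arXiv:1512.09112 — 6 statements merged into one kernel-verified Lean document; each statement's English description precedes it below -/
import Mathlib

section
/- Let G be a finite group, π: G → Γ a surjective group homomorphism, p a prime, and T a subgroup of Γ that is cyclic-by-p (i.e., T has a normal Sylow p-subgroup with cyclic quotient of order prime to p). Then there exists a cyclic-by-p subgroup T' of G with π(T') = T. -/
/-- A finite group `H` is cyclic-by-`p` if it has a normal Sylow `p`-subgroup
(i.e. a normal `p`-subgroup of index prime to `p`) with cyclic quotient
(of order prime to `p`). -/
def IsCyclicByP (p : ℕ) (H : Type*) [Group H] : Prop :=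
  ∃ P : Subgroup H, P.Normal ∧ IsPGroup p P ∧ P.index.Coprime p ∧
    ∃ g : H, ∀ h : H, ∃ n : ℤ, g ^ n * h⁻¹ ∈ P

/-! Restricting `π` to `π⁻¹(T)` reduces to a surjection `φ : G → Q` onto a cyclic-by-`p` group
with normal Sylow subgroup `P` and `Q / P` generated by `g P`. A Sylow `p`-subgroup `S` of `G` maps
onto `P`, and the Frattini argument `G = N_G(S) · φ⁻¹(P)` gives some `m ∈ N_G(S)` with
`φ m ∈ g P`. Then `S ⟨m⟩` is cyclic-by-`p` (its index over `S` divides `[G : S]`) and maps onto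
`P ⟨φ m⟩ = Q`. -/

open Subgroup Pointwise

theorem IsCyclicByP.of_mulEquiv {p : ℕ} {H K : Type*} [Group H] [Group K]
    (e : H ≃* K) (h : IsCyclicByP p H) : IsCyclicByP p K := by
  obtain ⟨P, hnorm, hP, hidx, g, hg⟩ := h
  refine ⟨P.map (e : H →* K), ?_, hP.map (e : H →* K), ?_, e g, fun k => ?_⟩
  · rw [map_equiv_eq_comap_symm]
    exact hnorm.comap (e.symm : K →* H)
  · rwa [map_equiv_eq_comap_symm, index_comap_of_surjective _ e.symm.surjective]
  · obtain ⟨n, hn⟩ := hg (e.symm k)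
    exact ⟨n, g ^ n * (e.symm k)⁻¹, hn, by simp⟩

theorem isCyclicByP_sup_zpowers {G : Type*} [Group G] {p : ℕ} {S : Subgroup G} {m : G}
    (hm : m ∈ normalizer S) (hS : IsPGroup p S)
    (hidx : (S.relIndex (S ⊔ zpowers m)).Coprime p) :
    IsCyclicByP p ↥(S ⊔ zpowers m) := by
  have hzm : zpowers m ≤ normalizer S := zpowers_le.mpr hm
  refine ⟨S.subgroupOf (S ⊔ zpowers m),
    normal_subgroupOf_of_le_normalizer (sup_le le_normalizer hzm),
    hS.of_equiv (subgroupOfEquivOfLe le_sup_left).symm, hidx,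
    ⟨m, mem_sup_right (mem_zpowers m)⟩, fun ⟨h, hh⟩ => ?_⟩
  rw [← SetLike.mem_coe, coe_mul_of_right_le_normalizer_left S _ hzm] at hh
  obtain ⟨s, hs, _, ⟨n, rfl⟩, rfl⟩ := hh
  refine ⟨n, ?_⟩
  rw [mem_subgroupOf]
  simpa [mul_assoc] using S.inv_mem hs

theorem exists_isCyclicByP_map_eq_top {G Q : Type*} [Group G] [Group Q] [Finite G]
    (p : ℕ) [hp : Fact p.Prime] (φ : G →* Q) (hφ : Function.Surjective φ)
    (hQ : IsCyclicByP p Q) :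
    ∃ T : Subgroup G, IsCyclicByP p T ∧ T.map φ = ⊤ := by
  obtain ⟨P, hPnorm, hPp, hPidx, g, hg⟩ := hQ
  have : Finite Q := .of_surjective φ hφ
  obtain ⟨S, hS⟩ := Sylow.mapSurjective_surjective hφ p
    (hPp.toSylow (hp.out.coprime_iff_not_dvd.mp hPidx.symm))
  have hSP : (S : Subgroup G).map φ = P := congrArg Sylow.toSubgroup hS
  have : (P.comap φ).Normal := hPnorm.comap φ
  have hfrattini : normalizer (S : Set G) ⊔ P.comap φ = ⊤ :=
    S.normalizer_sup_eq_top' (map_le_iff_le_comap.mp hSP.le)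
  obtain ⟨y, rfl⟩ := hφ g
  obtain ⟨m, hm, s, hs, rfl⟩ : y ∈ (normalizer (S : Set G) : Set G) * (P.comap φ : Set G) := by
    rw [← mul_normal, hfrattini]; trivial
  set T : Subgroup G := (S : Subgroup G) ⊔ zpowers m
  have hPT : P ≤ T.map φ := hSP ▸ map_mono le_sup_left
  have hgT : φ (m * s) ∈ T.map φ :=
    map_mul φ m s ▸ mul_mem (mem_map_of_mem φ (mem_sup_right (mem_zpowers m))) (hPT hs)
  refine ⟨T, isCyclicByP_sup_zpowers hm S.isPGroup' ?_, eq_top_iff.mpr ?_⟩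
  · exact Nat.Coprime.coprime_dvd_left (relIndex_dvd_index_of_le le_sup_left)
      (hp.out.coprime_iff_not_dvd.mpr S.not_dvd_index).symm
  · intro q _
    obtain ⟨n, hn⟩ := hg q
    simpa using mul_mem (inv_mem (hPT hn)) (zpow_mem hgT n)

theorem stmt0 {G Γ : Type*} [Group G] [Group Γ] [Finite G]
    (p : ℕ) [Fact p.Prime] (π : G →* Γ) (hπ : Function.Surjective π)
    (T : Subgroup Γ) (hT : IsCyclicByP p T) :
    ∃ T' : Subgroup G, IsCyclicByP p T' ∧ T'.map π = T := by
  obtain ⟨T', hT', hmap⟩ := exists_isCyclicByP_map_eq_top p _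
    (π.subgroupComap_surjective_of_surjective T hπ) hT
  refine ⟨T'.map (T.comap π).subtype,
    hT'.of_mulEquiv (T'.equivMapOfInjective _ (T.comap π).subtype_injective), ?_⟩
  have hcomp : π.comp (T.comap π).subtype = T.subtype.comp (π.subgroupComap T) := rfl
  rw [map_map, hcomp, ← map_map, hmap, ← MonoidHom.range_eq_map, range_subtype]
end

section
/- Let p be an odd prime and G a finite group such that every cyclic-by-p subgroup of G is either cyclic or dihedral of order 2·p^n for some n. Let Q be a nontrivial p-subgroup of G. If x ∈ N_G(Q) does not centralize Q, then x is an involution acting by inversion on C_G(Q), and C_G(Q) is abelian. -/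
/-!
For `g ∈ N_G(Q)` the group `Q⟨g⟩` is cyclic-by-`p` when `g` is a `p'`-element, and a `p`-group when
`g` is a `p`-element. If it is cyclic, `g` centralizes `Q`; if it is dihedral, the elements of `Q`
have odd order and so are rotations, and a `g` not centralizing them is a reflection: an involution
inverting `Q`. Hence `p`-elements of `N_G(Q)` centralize `Q`. Splitting `g ∈ N_G(Q) \ C_G(Q)` as
`g = a b` into its `p`-part `a ∈ C_G(Q)` and `p'`-part `b`, the element `b` inverts the `p`-group
`Q⟨a⟩` while commuting with `a`, so `a = 1` and `g² = 1`. Applied to `x` and to `c x` for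
`c ∈ C_G(Q)`, this gives `x c x⁻¹ = c⁻¹`, and an inverting automorphism makes `C_G(Q)` abelian.
-/

open Subgroup

section Elementary

variable {G : Type*} [Group G]

theorem eq_one_of_sq_eq_one_of_pow_odd {a : G} {n : ℕ} (hn : Odd n) (h2 : a ^ 2 = 1)
    (h : a ^ n = 1) : a = 1 :=
  orderOf_eq_one_iff.mp <| Nat.eq_one_of_dvd_coprimes (Nat.coprime_two_left.mpr hn)
    (orderOf_dvd_of_pow_eq_one h2) (orderOf_dvd_of_pow_eq_one h)

theorem orderOf_ne_two_of_pow_odd {a : G} {n : ℕ} (hn : Odd n) (h : a ^ n = 1) :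
    orderOf a ≠ 2 := fun h2 => by
  have ha := eq_one_of_sq_eq_one_of_pow_odd hn (h2 ▸ pow_orderOf_eq_one a) h
  simp [ha] at h2

theorem conj_eq_inv_of_sq_eq_one {x c : G} (hx : x ^ 2 = 1) (hcx : (c * x) ^ 2 = 1) :
    x * c * x⁻¹ = c⁻¹ := by
  rw [sq] at hx hcx
  rw [inv_eq_of_mul_eq_one_right hx, eq_inv_iff_mul_eq_one]
  calc x * c * x * c = x * (c * x * (c * x)) * x⁻¹ := by group
    _ = 1 := by rw [hcx, mul_one, mul_inv_cancel]

theorem mul_comm_of_conj_eq_inv {x a b : G} (ha : x * a * x⁻¹ = a⁻¹) (hb : x * b * x⁻¹ = b⁻¹)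
    (hab : x * (a * b) * x⁻¹ = (a * b)⁻¹) : a * b = b * a :=
  inv_injective <| by rw [← hab, mul_inv_rev b, ← ha, ← hb]; group

theorem exists_mul_eq_of_pow_mul_eq_one {g : G} {m n : ℕ} (hmn : m.Coprime n)
    (hg : g ^ (m * n) = 1) :
    ∃ a ∈ zpowers g, ∃ b ∈ zpowers g, a ^ m = 1 ∧ b ^ n = 1 ∧ a * b = g := by
  obtain ⟨u, v, huv⟩ := Nat.isCoprime_iff_coprime.mpr hmn
  have hg' : g ^ ((m : ℤ) * n) = 1 := by exact_mod_cast hg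
  refine ⟨g ^ (v * n), zpow_mem_zpowers g _, g ^ (u * m), zpow_mem_zpowers g _, ?_, ?_, ?_⟩
  · rw [← zpow_natCast, ← zpow_mul, mul_assoc, mul_comm, zpow_mul, mul_comm (n : ℤ), hg',
      one_zpow]
  · rw [← zpow_natCast, ← zpow_mul, mul_assoc, mul_comm, zpow_mul, hg', one_zpow]
  · rw [← zpow_add, add_comm, huv, zpow_one]

end Elementary

theorem DihedralGroup.commute_or_inverts {n : ℕ} (g : DihedralGroup n) :
    (∀ s, orderOf s ≠ 2 → Commute g s) ∨
      (g ^ 2 = 1 ∧ ∀ s, orderOf s ≠ 2 → g * s * g⁻¹ = s⁻¹) := by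
  have rotation : ∀ s : DihedralGroup n, orderOf s ≠ 2 → ∃ i, s = r i := by
    rintro (i | i) hs
    · exact ⟨i, rfl⟩
    · exact absurd (orderOf_sr i) hs
  rcases g with i | i
  · left
    intro s hs
    obtain ⟨j, rfl⟩ := rotation s hs
    simp only [Commute, SemiconjBy, r_mul_r, add_comm]
  · refine Or.inr ⟨by rw [sq, sr_mul_self], fun s hs => ?_⟩
    obtain ⟨j, rfl⟩ := rotation s hs
    rw [inv_sr, sr_mul_r, sr_mul_sr, inv_r]
    ring_nf

theorem commute_or_inverts_of_isCyclic_or_dihedral {H : Type*} [Group H]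
    (hH : IsCyclic H ∨ ∃ n, Nonempty (H ≃* DihedralGroup n)) (g : H) :
    (∀ s, orderOf s ≠ 2 → Commute g s) ∨
      (g ^ 2 = 1 ∧ ∀ s, orderOf s ≠ 2 → g * s * g⁻¹ = s⁻¹) := by
  obtain hcyc | ⟨n, ⟨e⟩⟩ := hH
  · exact Or.inl fun s _ => mul_comm' g s
  · refine (DihedralGroup.commute_or_inverts (e g)).imp (fun h s hs => ?_) fun ⟨h2, h⟩ =>
      ⟨e.injective ?_, fun s hs => e.injective ?_⟩
    · simpa using (h (e s) (by rwa [e.orderOf_eq])).map e.symm.toMonoidHom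
    · simpa using h2
    · simpa using h (e s) (by rwa [e.orderOf_eq])

theorem IsPGroup.orderOf_ne_two {p : ℕ} {H : Type*} [Group H] (hp : Odd p) (hH : IsPGroup p H)
    (h : H) : orderOf h ≠ 2 :=
  let ⟨_, hk⟩ := hH h
  orderOf_ne_two_of_pow_odd hp.pow hk

theorem isCyclicByP_of_isPGroup {p : ℕ} {H : Type*} [Group H] (hH : IsPGroup p H) :
    IsCyclicByP p H :=
  ⟨⊤, inferInstance, hH.of_equiv topEquiv.symm, by simp, 1, fun _ => ⟨0, mem_top _⟩⟩

theorem index_dvd_orderOf_of_forall_zpow_mul_inv_mem {H : Type*} [Group H] {P : Subgroup H}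
    [P.Normal] {g : H} (hg : ∀ h : H, ∃ n : ℤ, g ^ n * h⁻¹ ∈ P) : P.index ∣ orderOf g := by
  have hgen : ∀ z : H ⧸ P, z ∈ zpowers (g : H ⧸ P) := by
    intro z
    obtain ⟨h, rfl⟩ := QuotientGroup.mk_surjective z
    obtain ⟨n, hn⟩ := hg h
    refine ⟨n, ?_⟩
    change (g : H ⧸ P) ^ n = h
    rw [← QuotientGroup.mk_zpow]
    exact QuotientGroup.eq_iff_div_mem.mpr (by rwa [div_eq_mul_inv])
  rw [index_eq_card, ← orderOf_eq_card_of_forall_mem_zpowers hgen]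
  exact orderOf_map_dvd (QuotientGroup.mk' P) g

section Subgroups

variable {G : Type*} [Group G] {p : ℕ}

theorem mem_centralizer_or_inverts {H : Subgroup G}
    (hH : IsCyclic H ∨ ∃ n, Nonempty (H ≃* DihedralGroup n)) {R : Subgroup G} (hRH : R ≤ H)
    (hR : ∀ r : R, orderOf r ≠ 2) {g : G} (hg : g ∈ H) :
    g ∈ centralizer (R : Set G) ∨ (g ^ 2 = 1 ∧ ∀ r ∈ R, g * r * g⁻¹ = r⁻¹) := by
  have hR' : ∀ r (hr : r ∈ R), orderOf (⟨r, hRH hr⟩ : H) ≠ 2 := fun r hr => by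
    rw [orderOf_mk, ← orderOf_mk r hr]
    exact hR _
  refine (commute_or_inverts_of_isCyclic_or_dihedral hH ⟨g, hg⟩).imp
    (fun h => mem_centralizer_iff.mpr fun r hr => ?_) fun ⟨h2, h⟩ =>
      ⟨congrArg Subtype.val h2, fun r hr => ?_⟩
  · exact congrArg Subtype.val (h _ (hR' r hr)).symm
  · exact congrArg Subtype.val (h _ (hR' r hr))

theorem isCyclicByP_sup_zpowers_s2 {R : Subgroup G} (hR : IsPGroup p R) {g : G}
    (hg : g ∈ normalizer (R : Set G)) (hgp : (orderOf g).Coprime p) :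
    IsCyclicByP p ↥(R ⊔ zpowers g) := by
  have hgR : zpowers g ≤ normalizer (R : Set G) := zpowers_le.mpr hg
  have hN : (R.subgroupOf (R ⊔ zpowers g)).Normal :=
    (normal_subgroupOf_iff_le_normalizer le_sup_left).mpr (sup_le le_normalizer hgR)
  have hcoset : ∀ h : ↥(R ⊔ zpowers g), ∃ n : ℤ,
      (⟨g, mem_sup_right (mem_zpowers g)⟩ : ↥(R ⊔ zpowers g)) ^ n * h⁻¹ ∈
        R.subgroupOf (R ⊔ zpowers g) := by
    rintro ⟨h, hh⟩
    rw [← SetLike.mem_coe, coe_mul_of_right_le_normalizer_left R _ hgR] at hh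
    obtain ⟨r, hr, _, ⟨n, rfl⟩, rfl⟩ := hh
    exact ⟨n, by simpa [mem_subgroupOf] using inv_mem hr⟩
  refine ⟨_, hN, hR.comap_subtype, ?_, _, hcoset⟩
  refine Nat.Coprime.coprime_dvd_left ?_ hgp
  simpa only [orderOf_mk] using index_dvd_orderOf_of_forall_zpow_mul_inv_mem hcoset

theorem isPGroup_zpowers_of_pow_eq_one [Fact p.Prime] {a : G} {k : ℕ} (h : a ^ p ^ k = 1) :
    IsPGroup p (zpowers a) :=
  IsPGroup.of_card_dvd_pow ((Nat.card_zpowers a).symm ▸ orderOf_dvd_of_pow_eq_one h)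

theorem mem_centralizer_of_pow_prime_pow_eq_one [Fact p.Prime] (hp : Odd p)
    (hG : ∀ H : Subgroup G, IsCyclicByP p H →
      IsCyclic H ∨ ∃ n : ℕ, Nonempty (H ≃* DihedralGroup (p ^ n)))
    {Q : Subgroup G} (hQ : IsPGroup p Q) {a : G} (ha : a ∈ normalizer (Q : Set G)) {k : ℕ}
    (hak : a ^ p ^ k = 1) : a ∈ centralizer (Q : Set G) := by
  have hH : IsPGroup p ↥(Q ⊔ zpowers a) :=
    hQ.to_sup_of_normal_left' (isPGroup_zpowers_of_pow_eq_one hak) (zpowers_le.mpr ha)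
  refine (mem_centralizer_or_inverts
    ((hG _ (isCyclicByP_of_isPGroup hH)).imp_right fun ⟨n, e⟩ => ⟨p ^ n, e⟩) le_sup_left
    (hQ.orderOf_ne_two hp) (mem_sup_right (mem_zpowers a))).elim id fun ⟨ha2, _⟩ => ?_
  rw [eq_one_of_sq_eq_one_of_pow_odd hp.pow ha2 hak]
  exact one_mem _

theorem sq_eq_one_and_conj_eq_inv_of_coprime (hp : Odd p)
    (hG : ∀ H : Subgroup G, IsCyclicByP p H →
      IsCyclic H ∨ ∃ n : ℕ, Nonempty (H ≃* DihedralGroup (p ^ n)))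
    {R : Subgroup G} (hR : IsPGroup p R) {g : G} (hg : g ∈ normalizer (R : Set G))
    (hgc : g ∉ centralizer (R : Set G)) (hgp : (orderOf g).Coprime p) :
    g ^ 2 = 1 ∧ ∀ r ∈ R, g * r * g⁻¹ = r⁻¹ :=
  (mem_centralizer_or_inverts
    ((hG _ (isCyclicByP_sup_zpowers_s2 hR hg hgp)).imp_right fun ⟨n, e⟩ => ⟨p ^ n, e⟩) le_sup_left
    (hR.orderOf_ne_two hp) (mem_sup_right (mem_zpowers g))).resolve_left hgc

theorem sq_eq_one_of_mem_normalizer_of_notMem_centralizer [Finite G] [Fact p.Prime]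
    (hp : Odd p)
    (hG : ∀ H : Subgroup G, IsCyclicByP p H →
      IsCyclic H ∨ ∃ n : ℕ, Nonempty (H ≃* DihedralGroup (p ^ n)))
    {Q : Subgroup G} (hQ : IsPGroup p Q) {g : G} (hg : g ∈ normalizer (Q : Set G))
    (hgc : g ∉ centralizer (Q : Set G)) : g ^ 2 = 1 := by
  have hcop := Nat.coprime_ordCompl (Fact.out : p.Prime) (orderOf_pos g).ne'
  obtain ⟨a, ha, b, hb, hap, hbp, rfl⟩ := exists_mul_eq_of_pow_mul_eq_one (hcop.pow_left _)
    (by rw [Nat.ordProj_mul_ordCompl_eq_self]; exact pow_orderOf_eq_one g)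
  have hab : Commute a b := congrArg Subtype.val (mul_comm' (⟨a, ha⟩ : zpowers (a * b)) ⟨b, hb⟩)
  have hN : zpowers (a * b) ≤ normalizer (Q : Set G) := zpowers_le.mpr hg
  have haC := mem_centralizer_of_pow_prime_pow_eq_one hp hG hQ (hN ha) hap
  have hbC : b ∉ centralizer (Q : Set G) := fun hbC => hgc (mul_mem haC hbC)
  have hT : IsPGroup p ↥(Q ⊔ zpowers a) :=
    hQ.to_sup_of_normal_left' (isPGroup_zpowers_of_pow_eq_one hap) (zpowers_le.mpr (hN ha))
  have hbT : b ∈ normalizer ((Q ⊔ zpowers a : Subgroup G) : Set G) :=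
    normalizer_inf_normalizer_le_normalizer_sup Q (zpowers a) ⟨hN hb,
      centralizer_le_normalizer _ <| mem_centralizer_iff.mpr fun h hh => by
        obtain ⟨k, rfl⟩ := mem_zpowers_iff.mp hh
        exact (hab.zpow_left k).eq⟩
  obtain ⟨hb2, hbinv⟩ := sq_eq_one_and_conj_eq_inv_of_coprime hp hG hT hbT
    (fun h => hbC (centralizer_le (SetLike.coe_subset_coe.mpr le_sup_left) h))
    (Nat.Coprime.coprime_dvd_left (orderOf_dvd_of_pow_eq_one hbp) hcop.symm)
  have ha2 : a ^ 2 = 1 := by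
    have := hbinv a (mem_sup_right (mem_zpowers a))
    rw [hab.symm.eq, mul_inv_cancel_right] at this
    rw [sq, mul_eq_one_iff_eq_inv, ← this]
  rw [eq_one_of_sq_eq_one_of_pow_odd hp.pow ha2 hap, one_mul, hb2]

end Subgroups

theorem stmt2_general {G : Type*} [Group G] [Finite G] (p : ℕ) [Fact p.Prime] (hp : Odd p)
    (hG : ∀ H : Subgroup G, IsCyclicByP p H →
      IsCyclic H ∨ ∃ n : ℕ, Nonempty (H ≃* DihedralGroup (p ^ n)))
    (Q : Subgroup G) (hQp : IsPGroup p Q)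
    (x : G) (hx : x ∈ Subgroup.normalizer (Q : Set G)) (hxc : x ∉ Subgroup.centralizer (Q : Set G)) :
    x ≠ 1 ∧ x ^ 2 = 1 ∧
    (∀ a ∈ Subgroup.centralizer (Q : Set G), x * a * x⁻¹ = a⁻¹) ∧
    (∀ a ∈ Subgroup.centralizer (Q : Set G), ∀ b ∈ Subgroup.centralizer (Q : Set G),
      a * b = b * a) := by
  have hsq : ∀ {y : G}, y ∈ normalizer (Q : Set G) → y ∉ centralizer (Q : Set G) → y ^ 2 = 1 :=
    sq_eq_one_of_mem_normalizer_of_notMem_centralizer hp hG hQp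
  have hinv : ∀ c ∈ centralizer (Q : Set G), x * c * x⁻¹ = c⁻¹ := fun c hc =>
    conj_eq_inv_of_sq_eq_one (hsq hx hxc) <| hsq (mul_mem (centralizer_le_normalizer _ hc) hx)
      fun hcx => hxc (by simpa using mul_mem (inv_mem hc) hcx)
  refine ⟨fun h => hxc (h ▸ one_mem _), hsq hx hxc, hinv, fun a ha b hb => ?_⟩
  exact mul_comm_of_conj_eq_inv (hinv a ha) (hinv b hb) (hinv _ (mul_mem ha hb))

theorem stmt2 {G : Type*} [Group G] [Finite G] (p : ℕ) [Fact p.Prime] (hp : Odd p)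
    (hG : ∀ H : Subgroup G, IsCyclicByP p H →
      IsCyclic H ∨ ∃ n : ℕ, Nonempty (H ≃* DihedralGroup (p ^ n)))
    (Q : Subgroup G) (hQ : Q ≠ ⊥) (hQp : IsPGroup p Q)
    (x : G) (hx : x ∈ Subgroup.normalizer (Q : Set G)) (hxc : x ∉ Subgroup.centralizer (Q : Set G)) :
    x ≠ 1 ∧ x ^ 2 = 1 ∧
    (∀ a ∈ Subgroup.centralizer (Q : Set G), x * a * x⁻¹ = a⁻¹) ∧
    (∀ a ∈ Subgroup.centralizer (Q : Set G), ∀ b ∈ Subgroup.centralizer (Q : Set G),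
      a * b = b * a) :=
  stmt2_general p hp hG Q hQp x hx hxc
end

section
/- Let G be a finite group with cyclic Sylow p-subgroup P, and set R = O_{p'}(G), the largest normal subgroup of G of order prime to p. Then the following are equivalent: (1) G = RP; (2) N_G(P) = C_G(P); (3) N_G(Q) = C_G(Q) for every nontrivial subgroup Q of P. -/
/-!
If `G = RP` with `R` a normal `p'`-subgroup and `P` abelian, then for `Q ≤ P` write
`g = r x ∈ N(Q)`: the factor `x ∈ P` centralizes `Q`, hence `r ∈ N(Q)`, and the commutators
`⁅r, q⁆` lie in `R ∩ Q = 1`, so `g ∈ C(Q)`. Conversely, `N(P) = C(P)` is the hypothesis of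
Burnside's transfer theorem, which yields a normal `p`-complement; being a normal
`p'`-subgroup it lies in `R`, so `G = RP`.
-/

open Subgroup

theorem Subgroup.mem_centralizer_of_mem_normalizer_of_disjoint {G : Type*} [Group G]
    {R Q : Subgroup G} (hR : R.Normal) (hRQ : Disjoint R Q) {r : G} (hr : r ∈ R)
    (hrQ : r ∈ normalizer (Q : Set G)) : r ∈ centralizer (Q : Set G) := by
  refine mem_centralizer_iff_commutator_eq_one'.mpr fun q hq ↦ disjoint_def.mp hRQ ?_ ?_
  · rw [commutatorElement_def, mul_assoc, mul_assoc]
    exact mul_mem hr (by simpa [mul_assoc] using hR.conj_mem _ (inv_mem hr) q)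
  · exact mul_mem ((mem_normalizer_iff.mp hrQ q).mp hq) (inv_mem hq)

theorem Subgroup.normalizer_eq_centralizer_of_forall_eq_mul {G : Type*} [Group G]
    {R P Q : Subgroup G} (hR : R.Normal) [IsMulCommutative P]
    (hG : ∀ g : G, ∃ r ∈ R, ∃ x ∈ P, g = r * x) (hQP : Q ≤ P) (hRQ : Disjoint R Q) :
    normalizer (Q : Set G) = centralizer (Q : Set G) := by
  refine le_antisymm (fun g hg ↦ ?_) (centralizer_le_normalizer _)
  obtain ⟨r, hr, x, hx, rfl⟩ := hG g
  have hxQ : x ∈ centralizer (Q : Set G) := centralizer_le hQP (le_centralizer P hx)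
  have hrQ : r ∈ normalizer (Q : Set G) := by
    simpa using mul_mem hg (inv_mem (centralizer_le_normalizer _ hxQ))
  exact mul_mem (mem_centralizer_of_mem_normalizer_of_disjoint hR hRQ hr hrQ) hxQ

theorem Sylow.forall_eq_mul_of_normalizer_le_centralizer {G : Type*} [Group G] [Finite G]
    {p : ℕ} [Fact p.Prime] (P : Sylow p G)
    (hP : normalizer ((P : Subgroup G) : Set G) ≤ centralizer ((P : Subgroup G) : Set G))
    {R : Subgroup G} (hmax : ∀ S : Subgroup G, S.Normal → (Nat.card S).Coprime p → S ≤ R)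
    (g : G) : ∃ r ∈ R, ∃ x ∈ (P : Subgroup G), g = r * x := by
  have hK := MonoidHom.ker_transferSylow_isComplement' P hP
  have hKR : (MonoidHom.transferSylow P hP).ker ≤ R :=
    hmax _ inferInstance <| (Nat.coprime_comm.mp <| (Fact.out : p.Prime).coprime_iff_not_dvd.mpr
      (MonoidHom.not_dvd_card_ker_transferSylow P hP))
  obtain ⟨⟨k, x⟩, hkx⟩ := (hK.existsUnique g).exists
  exact ⟨k, hKR k.2, x, x.2, hkx.symm⟩

theorem stmt4 {G : Type*} [Group G] [Finite G] (p : ℕ) [Fact p.Prime]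
    (P : Sylow p G) (hP : IsCyclic (P : Subgroup G))
    (R : Subgroup G) (hRn : R.Normal) (hR : (Nat.card R).Coprime p)
    (hmax : ∀ S : Subgroup G, S.Normal → (Nat.card S).Coprime p → S ≤ R) :
    List.TFAE [
      ∀ g : G, ∃ r ∈ R, ∃ x ∈ (P : Subgroup G), g = r * x,
      Subgroup.normalizer ((P : Subgroup G) : Set G) = Subgroup.centralizer ((P : Subgroup G) : Set G),
      ∀ Q : Subgroup G, Q ≠ ⊥ → Q ≤ P → Subgroup.normalizer (Q : Set G) = Subgroup.centralizer (Q : Set G)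
    ] := by
  have : IsMulCommutative (P : Subgroup G) := .of_comm hP.commGroup.mul_comm
  have hRQ {Q : Subgroup G} (hQP : Q ≤ P) : Disjoint R Q := by
    obtain ⟨k, hk⟩ := (P.2.to_le hQP).exists_card_eq
    exact disjoint_of_coprime_natCard (hk ▸ hR.pow_right k)
  tfae_have 1 → 3 := fun h1 Q _ hQP ↦
    normalizer_eq_centralizer_of_forall_eq_mul hRn h1 hQP (hRQ hQP)
  tfae_have 3 → 2 := by
    intro h3
    by_cases hb : (P : Subgroup G) = ⊥
    · rw [hb, normalizer_eq_top, eq_comm, centralizer_eq_top_iff_subset, coe_bot]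
      exact Set.singleton_subset_iff.mpr (one_mem _)
    · exact h3 P hb le_rfl
  tfae_have 2 → 1 := fun h2 ↦ P.forall_eq_mul_of_normalizer_le_centralizer h2.le hmax
  tfae_finish
end

section
/- Let G be a finite group with cyclic Sylow p-subgroup P such that N_G(Q) = C_G(Q) for every nontrivial subgroup Q of P. Then every cyclic-by-p subgroup of G is cyclic. -/
open Subgroup

theorem IsCyclicByP.exists_normal_isCyclic_quotient {p : ℕ} {H : Type*} [Group H]
    (hH : IsCyclicByP p H) :
    ∃ (K : Subgroup H) (_ : K.Normal),
      IsPGroup p K ∧ K.index.Coprime p ∧ IsCyclic (H ⧸ K) := by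
  obtain ⟨K, hKn, hKp, hKcop, g, hg⟩ := hH
  refine ⟨K, hKn, hKp, hKcop, ⟨g, fun q ↦ ?_⟩⟩
  induction q using QuotientGroup.induction_on with
  | H h =>
    obtain ⟨n, hn⟩ := hg h
    refine ⟨n, ?_⟩
    dsimp only
    rwa [← QuotientGroup.mk_zpow, QuotientGroup.eq_iff_div_mem, div_eq_mul_inv]

theorem isCyclic_of_le_center_of_coprime {H : Type*} [Group H] [Finite H] {K : Subgroup H}
    [K.Normal] (hK : K ≤ center H) [IsCyclic K] [IsCyclic (H ⧸ K)]
    (hcop : (Nat.card K).Coprime K.index) : IsCyclic H := by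
  let f := QuotientGroup.mk' K
  have hker : f.ker = K := QuotientGroup.ker_mk' K
  let _ := commGroupOfCyclicCenterQuotient f (hker.le.trans hK)
  have : IsCyclic f.ker := by rw [hker]; infer_instance
  refine Group.isCyclic_of_coprime_card_ker f ?_ (QuotientGroup.mk'_surjective K)
  rwa [hker, ← K.index_eq_card]

theorem Subgroup.le_normalizer_map_subtype {G : Type*} [Group G] {H : Subgroup G}
    {K : Subgroup H} [K.Normal] : H ≤ normalizer (K.map H.subtype : Set G) := by
  intro g hg
  exact le_normalizer_map H.subtype
    ⟨⟨g, hg⟩, le_normalizer_of_normal (K := ⊤) (mem_top _), rfl⟩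

theorem Subgroup.le_center_of_le_centralizer_map_subtype {G : Type*} [Group G] {H : Subgroup G}
    {K : Subgroup H} (hK : H ≤ centralizer (K.map H.subtype : Set G)) : K ≤ center H := by
  intro k hk
  rw [mem_center_iff]
  intro g
  exact Subtype.ext (mem_centralizer_iff.mp (hK g.2) k ⟨k, hk, rfl⟩).symm

section Sylow

variable {G : Type*} [Group G] {p : ℕ} [Fact p.Prime] [Finite (Sylow p G)]

theorem IsPGroup.isCyclic_of_isCyclic_sylow (P : Sylow p G) [IsCyclic P] {L : Subgroup G}
    (hL : IsPGroup p L) : IsCyclic L := by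
  obtain ⟨Q, hLQ⟩ := hL.exists_le_sylow
  have : IsCyclic Q := isCyclic_of_surjective _ (Q.equiv P).symm.surjective
  exact Subgroup.isCyclic_of_le hLQ

theorem IsPGroup.exists_map_conj_le (P : Sylow p G) {L : Subgroup G} (hL : IsPGroup p L) :
    ∃ x : G, L.map (MulAut.conj x).toMonoidHom ≤ P := by
  obtain ⟨Q, hLQ⟩ := hL.exists_le_sylow
  obtain ⟨x, hx⟩ := MulAction.exists_smul_eq G Q P
  refine ⟨x, ?_⟩
  rw [← hx, Sylow.coe_subgroup_smul]
  exact Subgroup.map_mono hLQ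

theorem IsPGroup.normalizer_le_centralizer (P : Sylow p G)
    (h : ∀ Q : Subgroup G, Q ≠ ⊥ → Q ≤ P →
      normalizer (Q : Set G) = centralizer (Q : Set G))
    {L : Subgroup G} (hL : IsPGroup p L) : normalizer (L : Set G) ≤ centralizer (L : Set G) := by
  rcases eq_or_ne L ⊥ with rfl | hne
  · simp [mem_centralizer_iff, SetLike.le_def]
  obtain ⟨x, hx⟩ := hL.exists_map_conj_le P
  set c := (MulAut.conj x).toMonoidHom
  have hne' : L.map c ≠ ⊥ :=
    (map_eq_bot_iff_of_injective L (MulAut.conj x).injective).not.mpr hne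
  intro y hy
  have hcy : c y ∈ centralizer (L.map c : Set G) :=
    h _ hne' hx ▸ le_normalizer_map c ⟨y, hy, rfl⟩
  rw [mem_centralizer_iff] at hcy ⊢
  intro l hl
  exact (MulAut.conj x).injective (by simpa [c] using hcy (c l) ⟨l, hl, rfl⟩)

end Sylow

theorem stmt5 {G : Type*} [Group G] [Finite G] (p : ℕ) [Fact p.Prime]
    (P : Sylow p G) (hP : IsCyclic (P : Subgroup G))
    (h : ∀ Q : Subgroup G, Q ≠ ⊥ → Q ≤ P → Subgroup.normalizer (Q : Set G) = Subgroup.centralizer (Q : Set G)) :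
    ∀ H : Subgroup G, IsCyclicByP p H → IsCyclic H := by
  intro H hH
  obtain ⟨K, hKn, hKp, hKcop, hquot⟩ := hH.exists_normal_isCyclic_quotient
  have hK'p : IsPGroup p (K.map H.subtype) := hKp.map H.subtype
  have : IsCyclic K :=
    (K.equivMapOfInjective _ H.subtype_injective).isCyclic.mpr (hK'p.isCyclic_of_isCyclic_sylow P)
  have hK_central : K ≤ center H := le_center_of_le_centralizer_map_subtype <|
    le_normalizer_map_subtype.trans (hK'p.normalizer_le_centralizer P h)
  obtain ⟨a, hcard⟩ := hKp.exists_card_eq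
  exact isCyclic_of_le_center_of_coprime hK_central (hcard ▸ hKcop.symm.pow_left a)
end

section
/- Let p be an odd prime and G a finite group with cyclic Sylow p-subgroup P. Let Ω₁(P) be the subgroup of P of order p. Suppose there is an involution τ ∈ G that inverts the abelian group C_G(Ω₁(P)) and N_G(Ω₁(P)) is generated by C_G(Ω₁(P)) and τ. Then every cyclic-by-p subgroup of G is either cyclic or dihedral of order 2·p^n for some n ≥ 1. -/
open Subgroup

/-!
Let `K` be the normal Sylow `p`-subgroup of `H`; if `K = 1` then `H ≅ H/K` is cyclic. Otherwise
`K` lies in a conjugate `c P c⁻¹` of the cyclic group `P`, so `K` is cyclic and its subgroup of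
order `p` is `c Q c⁻¹`. Being characteristic in `K`, it is normalized by `H`, so `H` lies in
`N(c Q c⁻¹) = C ⟨τ⟩`, the conjugate of `N(Q) = C_G(Q) ⟨τ⟩`: the abelian group `C` is inverted by
the involution `τ`. Every element of the coset `C τ` is an involution inverting `C`; as `p` is
odd, `K ≤ C`.
If `H ≤ C`, then `H` is abelian with all Sylow subgroups cyclic, hence cyclic. Otherwise some
`σ ∈ H` lies in `C τ`; then `H/K` is cyclic of exponent `2`, so `|H : K| = 2`, and `σ` inverts the
cyclic group `K`: `H` is dihedral of order `2 |K|`.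
-/

theorem Subgroup.pow_natCard_eq_one {G : Type*} [Group G] (H : Subgroup G) {x : G} (hx : x ∈ H) :
    x ^ Nat.card H = 1 :=
  congrArg Subtype.val (pow_card_eq_one' (x := (⟨x, hx⟩ : H)))

namespace IsCyclic

variable {α : Type*} [Group α] [Finite α] [IsCyclic α]

theorem mem_subgroup_iff (H : Subgroup α) {x : α} : x ∈ H ↔ x ^ Nat.card H = 1 := by
  classical
  have := Fintype.ofFinite α
  refine ⟨H.pow_natCard_eq_one, fun hx => ?_⟩
  set S := Finset.univ.filter (fun y : α => y ^ Nat.card H = 1)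
  -- `H` fills up the set of solutions of `y ^ |H| = 1`, which has at most `|H|` elements.
  have hsub : (H : Set α).toFinset ⊆ S := fun y hy =>
    Finset.mem_filter.2 ⟨Finset.mem_univ _, H.pow_natCard_eq_one (by simpa using hy)⟩
  have hcard : S.card ≤ (H : Set α).toFinset.card := by
    rw [Set.toFinset_card, ← Nat.card_eq_fintype_card]
    exact IsCyclic.card_pow_eq_one_le Nat.card_pos
  have hxS : x ∈ S := Finset.mem_filter.2 ⟨Finset.mem_univ x, hx⟩
  rw [← Finset.eq_of_subset_of_card_le hsub hcard] at hxS
  simpa using hxS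

theorem subgroup_le_iff {H K : Subgroup α} : H ≤ K ↔ Nat.card H ∣ Nat.card K := by
  refine ⟨card_dvd_of_le, fun ⟨m, hm⟩ x hx => (mem_subgroup_iff K).2 ?_⟩
  rw [hm, pow_mul, (mem_subgroup_iff H).1 hx, one_pow]

end IsCyclic

theorem Subgroup.le_of_card_dvd_of_le_isCyclic {G : Type*} [Group G] [Finite G]
    {R A B : Subgroup G} [IsCyclic R] (hA : A ≤ R) (hB : B ≤ R) (h : Nat.card B ∣ Nat.card A) :
    B ≤ A := by
  have hle : B.subgroupOf R ≤ A.subgroupOf R := by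
    rwa [IsCyclic.subgroup_le_iff, Nat.card_congr (subgroupOfEquivOfLe hA).toEquiv,
      Nat.card_congr (subgroupOfEquivOfLe hB).toEquiv]
  exact fun x hx => hle (x := ⟨x, hB hx⟩) hx

theorem Subgroup.normalizer_le_normalizer_of_le_isCyclic {G : Type*} [Group G] [Finite G]
    {L Q : Subgroup G} [IsCyclic L] (hQL : Q ≤ L) :
    normalizer (L : Set G) ≤ normalizer (Q : Set G) := by
  intro g hg
  refine mem_normalizer_fintype fun q hq => ?_
  have hconj : Q.map (MulAut.conj g).toMonoidHom ≤ Q := by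
    refine le_of_card_dvd_of_le_isCyclic hQL ?_ ?_
    · rintro _ ⟨q, hq, rfl⟩
      exact (mem_normalizer_iff.1 hg q).1 (hQL hq)
    · rw [card_map_of_injective (MulAut.conj g).injective]
  exact hconj ⟨q, hq, rfl⟩

theorem IsPGroup.eq_one_of_mul_self_eq_one {p : ℕ} {G : Type*} [Group G] (hp : Odd p)
    (hG : IsPGroup p G) {g : G} (hg : g * g = 1) : g = 1 :=
  orderOf_eq_one_iff.1 <| (hG.orderOf_coprime hp.coprime_two_right g).eq_one_of_dvd <|
    orderOf_dvd_of_pow_eq_one (by rw [sq, hg])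

theorem isCyclic_quotient_of_forall_zpow_mul_inv_mem {G : Type*} [Group G] (K : Subgroup G)
    [K.Normal] (g : G) (hg : ∀ h : G, ∃ n : ℤ, g ^ n * h⁻¹ ∈ K) : IsCyclic (G ⧸ K) := by
  refine ⟨QuotientGroup.mk g, fun q => ?_⟩
  induction q using QuotientGroup.induction_on with
  | H h =>
    obtain ⟨n, hn⟩ := hg h
    exact ⟨n, (QuotientGroup.eq_iff_div_mem (N := K)).2 (by rwa [div_eq_mul_inv])⟩

theorem IsZGroup.of_isCyclic_quotient {G : Type*} [Group G] [Finite G] (K : Subgroup G) [K.Normal]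
    [IsCyclic K] [IsCyclic (G ⧸ K)] (h : (Nat.card K).Coprime K.index) : IsZGroup G :=
  isZGroup_of_coprime (f := K.subtype) (f' := QuotientGroup.mk' K)
    (by rw [QuotientGroup.ker_mk', range_subtype]) h

def Inverts {G : Type*} [Group G] (τ : G) (C : Subgroup G) : Prop :=
  ∀ a ∈ C, τ * a * τ⁻¹ = a⁻¹

theorem Inverts.mul_eq {G : Type*} [Group G] {τ : G} {C : Subgroup G} (h : Inverts τ C)
    (hτ : τ * τ = 1) {a : G} (ha : a ∈ C) : τ * a = a⁻¹ * τ := by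
  rw [← h a ha, inv_eq_of_mul_eq_one_right hτ, mul_assoc _ τ τ, hτ, mul_one]

theorem Inverts.mem_normalizer {G : Type*} [Group G] {τ : G} {C : Subgroup G} (h : Inverts τ C) :
    τ ∈ normalizer (C : Set G) := by
  refine mem_normalizer_iff.2 fun a => ⟨fun ha => h a ha ▸ inv_mem ha, fun ha => ?_⟩
  have ha' : τ * a * τ⁻¹ = a⁻¹ :=
    (MulAut.conj τ).injective (by simp only [MulAut.conj_apply]; rw [h _ ha]; group)
  rw [ha'] at ha
  exact inv_mem_iff.1 ha

theorem Inverts.map {G G' : Type*} [Group G] [Group G'] {τ : G} {C : Subgroup G} (h : Inverts τ C)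
    (f : G →* G') : Inverts (f τ) (C.map f) := by
  rintro _ ⟨a, ha, rfl⟩
  rw [← map_inv, ← map_mul, ← map_mul, h a ha, map_inv]

theorem nonempty_mulEquiv_dihedralGroup_of_index_eq_two {K : Type*} [Group K] [Finite K] {x σ : K}
    (hx : (zpowers x).index = 2) (hσ : σ ∉ zpowers x) (hσ2 : σ * σ = 1)
    (hσx : Inverts σ (zpowers x)) : Nonempty (K ≃* DihedralGroup (orderOf x)) := by
  set N := orderOf x
  have : NeZero N := ⟨(orderOf_pos x).ne'⟩
  have hadd (i j : ZMod N) : x ^ (i + j).val = x ^ i.val * x ^ j.val := by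
    rw [ZMod.val_add, pow_mod_orderOf, pow_add]
  have hneg (i : ZMod N) : x ^ (-i).val = (x ^ i.val)⁻¹ := by
    rw [eq_inv_iff_mul_eq_one, ← hadd, neg_add_cancel, ZMod.val_zero, pow_zero]
  have hσpow (i : ZMod N) : σ * x ^ i.val = x ^ (-i).val * σ := by
    rw [hneg, hσx.mul_eq hσ2 (pow_mem (mem_zpowers x) _)]
  let f : DihedralGroup N → K
    | .r i => x ^ i.val
    | .sr i => σ * x ^ i.val
  have hf : ∀ a b, f (a * b) = f a * f b := by
    rintro (i | i) (j | j)
    · exact hadd i j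
    · show σ * x ^ (j - i).val = x ^ i.val * (σ * x ^ j.val)
      rw [← neg_add_eq_sub, hadd, ← mul_assoc, hσpow, neg_neg, mul_assoc]
    · show σ * x ^ (i + j).val = σ * x ^ i.val * x ^ j.val
      rw [hadd, mul_assoc]
    · show x ^ (j - i).val = σ * x ^ i.val * (σ * x ^ j.val)
      rw [hσpow, mul_assoc, ← mul_assoc σ, hσ2, one_mul, ← hadd, neg_add_eq_sub]
  let φ : DihedralGroup N →* K := MonoidHom.mk' f hf
  have hinj : Function.Injective φ := by
    refine (injective_iff_map_eq_one φ).2 ?_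
    rintro (i | i) h
    · have hi : i.val = 0 := Nat.eq_zero_of_dvd_of_lt (orderOf_dvd_of_pow_eq_one h) (ZMod.val_lt i)
      rw [(ZMod.val_eq_zero i).1 hi, DihedralGroup.r_zero]
    · exact absurd (eq_inv_of_mul_eq_one_left h ▸ inv_mem (pow_mem (mem_zpowers x) _)) hσ
  have hcard : Nat.card K ≤ Nat.card (DihedralGroup N) := by
    rw [DihedralGroup.nat_card, ← (zpowers x).card_mul_index, hx, Nat.card_zpowers, mul_comm]
  exact ⟨(MulEquiv.ofBijective φ (hinj.bijective_of_nat_card_le hcard)).symm⟩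

section Involution

variable {G : Type*} [Group G] {C : Subgroup G} {τ : G}

theorem mul_mul_self_cancel (hτ : τ * τ = 1) (a : G) : τ * (τ * a) = a := by
  rw [← mul_assoc, hτ, one_mul]

theorem mem_or_mul_mem_of_mem_sup_closure (hτ : τ * τ = 1) (hinv : Inverts τ C) {n : G}
    (hn : n ∈ C ⊔ closure {τ}) : n ∈ C ∨ n * τ ∈ C := by
  have hτC : closure {τ} ≤ normalizer (C : Set G) :=
    (closure_le _).2 (Set.singleton_subset_iff.2 hinv.mem_normalizer)
  rw [← SetLike.mem_coe, coe_mul_of_right_le_normalizer_left C _ hτC] at hn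
  obtain ⟨a, ha, t, ht, rfl⟩ := hn
  have ht' : t = 1 ∨ t = τ := by
    induction ht using closure_induction with
    | mem _ h => exact Or.inr h
    | one => exact Or.inl rfl
    | mul _ _ _ _ h₁ h₂ => rcases h₁ with rfl | rfl <;> rcases h₂ with rfl | rfl <;> simp [hτ]
    | inv _ _ h => rcases h with rfl | rfl <;> simp [inv_eq_of_mul_eq_one_right hτ]
  rcases ht' with rfl | rfl
  · exact Or.inl (by simpa using ha)
  · exact Or.inr (by simpa [mul_assoc, hτ] using ha)

theorem mul_self_eq_one_of_mul_mem (hτ : τ * τ = 1) (hinv : Inverts τ C) {n : G}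
    (hn : n * τ ∈ C) : n * n = 1 := by
  have e : n * n = n * τ * (τ * (n * τ) * τ⁻¹) := by
    simp only [mul_assoc, inv_eq_of_mul_eq_one_right hτ, mul_mul_self_cancel hτ, hτ, mul_one]
  rw [e, hinv _ hn, mul_inv_cancel]

theorem Inverts.of_mul_mem [IsMulCommutative C] (hτ : τ * τ = 1) (hinv : Inverts τ C) {n : G}
    (hn : n * τ ∈ C) : Inverts n C := by
  intro a ha
  have e : n * a * n⁻¹ = n * τ * (τ * a * τ⁻¹) * (n * τ)⁻¹ := by
    simp only [mul_assoc, mul_inv_rev, inv_eq_of_mul_eq_one_right hτ, mul_mul_self_cancel hτ]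
  rw [e, hinv a ha, setLike_mul_comm hn (inv_mem ha), mul_inv_cancel_right]

theorem IsPGroup.le_of_le_sup_closure {p : ℕ} (hp : Odd p) (hτ : τ * τ = 1)
    (hinv : Inverts τ C) {K : Subgroup G} (hK : IsPGroup p K) (hKC : K ≤ C ⊔ closure {τ}) :
    K ≤ C := by
  intro k hk
  refine (mem_or_mul_mem_of_mem_sup_closure hτ hinv (hKC hk)).elim id fun hkτ => ?_
  have : (⟨k, hk⟩ : K) = 1 :=
    hK.eq_one_of_mul_self_eq_one hp (Subtype.ext (mul_self_eq_one_of_mul_mem hτ hinv hkτ))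
  rw [show k = 1 from congrArg Subtype.val this]
  exact one_mem C

end Involution

open scoped IsMulCommutative in
theorem isCyclic_or_dihedral_of_le_sup_closure {G : Type*} [Group G] [Finite G] {p : ℕ}
    [Fact p.Prime] (hp : Odd p) {C : Subgroup G} [IsMulCommutative C] {τ : G} (hτ : τ * τ = 1)
    (hinv : Inverts τ C) {H : Subgroup G} (hH : H ≤ C ⊔ closure {τ}) {K : Subgroup H} [K.Normal]
    (hKp : IsPGroup p K) [IsCyclic K] (hKidx : K.index.Coprime p) [IsCyclic (H ⧸ K)]
    (hKbot : K ≠ ⊥) :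
    IsCyclic H ∨ ∃ n : ℕ, 1 ≤ n ∧ Nonempty (H ≃* DihedralGroup (p ^ n)) := by
  obtain ⟨n, hn⟩ := hKp.exists_card_eq
  by_cases hHC : H ≤ C
  · have : IsMulCommutative H :=
      .of_setLike_mul_comm fun a ha b hb => setLike_mul_comm (hHC ha) (hHC hb)
    have : IsZGroup H := .of_isCyclic_quotient K (hn ▸ (hKidx.pow_right n).symm)
    exact Or.inl inferInstance
  obtain ⟨σ, hσC⟩ : ∃ σ : H, (σ : G) ∉ C := by simpa [SetLike.not_le_iff_exists] using hHC
  have hστ : (σ : G) * τ ∈ C :=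
    (mem_or_mul_mem_of_mem_sup_closure hτ hinv (hH σ.2)).resolve_left hσC
  have hKC : K.map H.subtype ≤ C :=
    (hKp.map H.subtype).le_of_le_sup_closure hp hτ hinv ((map_subtype_le K).trans hH)
  have hσK : σ ∉ K := fun h => hσC (hKC ⟨σ, h, rfl⟩)
  have hsq (h : H) (hh : (h : G) * τ ∈ C) : h * h = 1 :=
    Subtype.ext (mul_self_eq_one_of_mul_mem hτ hinv hh)
  -- `h` or `h * σ` is an involution, and in the abelian group `H ⧸ K` either gives `h ^ 2 = 1`.
  have hquot (q : H ⧸ K) : q ^ 2 = 1 := by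
    induction q using QuotientGroup.induction_on with
    | H h =>
      rcases mem_or_mul_mem_of_mem_sup_closure hτ hinv (hH h.2) with hh | hh
      · have hhσ := hsq (h * σ) (by simpa only [coe_mul, mul_assoc] using mul_mem hh hστ)
        calc (h : H ⧸ K) ^ 2 = ((h * σ : H) : H ⧸ K) ^ 2 * ((σ : H ⧸ K) ^ 2)⁻¹ := by
              rw [QuotientGroup.mk_mul, mul_pow, mul_inv_cancel_right]
          _ = 1 := by
              rw [sq, sq, ← QuotientGroup.mk_mul, ← QuotientGroup.mk_mul, hhσ, hsq σ hστ,
                QuotientGroup.mk_one, inv_one, one_mul]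
      · rw [sq, ← QuotientGroup.mk_mul, hsq h hh, QuotientGroup.mk_one]
  have hidx : K.index = 2 := by
    have hdvd : K.index ∣ 2 := by
      rw [index_eq_card, ← IsCyclic.exponent_eq_card]
      exact Monoid.exponent_dvd_of_forall_pow_eq_one hquot
    refine ((Nat.dvd_prime Nat.prime_two).1 hdvd).resolve_left fun h => hσK ?_
    rw [index_eq_one.1 h]
    exact mem_top σ
  obtain ⟨x, hx⟩ := IsCyclic.exists_ofOrder_eq_natCard (α := K)
  have hKx : zpowers (x : H) = K :=
    eq_of_le_of_card_ge (zpowers_le.2 x.2) (by rw [Nat.card_zpowers, orderOf_coe, hx])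
  refine Or.inr ⟨n, Nat.one_le_iff_ne_zero.2 ?_, ?_⟩
  · rintro rfl
    exact hKbot (card_eq_one.1 (by rw [hn, pow_zero]))
  · rw [← hn, ← hx, ← orderOf_coe]
    refine nonempty_mulEquiv_dihedralGroup_of_index_eq_two (by rwa [hKx]) (by rwa [hKx])
      (hsq σ hστ) fun y hy => ?_
    rw [hKx] at hy
    exact Subtype.ext (Inverts.of_mul_mem hτ hinv hστ y (hKC ⟨y, hy, rfl⟩))

theorem stmt8_general {G : Type*} [Group G] [Finite G] (p : ℕ) [Fact p.Prime] (hp : Odd p)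
    (P : Sylow p G) (hP : IsCyclic (P : Subgroup G))
    (Q : Subgroup G) (hQP : Q ≤ P) (hQcard : Nat.card Q = p)
    (τ : G) (hτ2 : τ ^ 2 = 1)
    (habel : ∀ a ∈ Subgroup.centralizer (Q : Set G), ∀ b ∈ Subgroup.centralizer (Q : Set G),
      a * b = b * a)
    (hinv : ∀ a ∈ Subgroup.centralizer (Q : Set G), τ * a * τ⁻¹ = a⁻¹)
    (hN : Subgroup.normalizer (Q : Set G) = Subgroup.centralizer (Q : Set G) ⊔ Subgroup.closure {τ}) :
    ∀ H : Subgroup G, IsCyclicByP p H →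
      IsCyclic H ∨ ∃ n : ℕ, 1 ≤ n ∧ Nonempty (H ≃* DihedralGroup (p ^ n)) := by
  rintro H ⟨K, hK, hKp, hKidx, g, hg⟩
  have := isCyclic_quotient_of_forall_zpow_mul_inv_mem K g hg
  by_cases hKbot : K = ⊥
  · subst hKbot
    exact Or.inl (isCyclic_of_surjective _ QuotientGroup.quotientBot.surjective)
  obtain ⟨R, hKR⟩ := (hKp.map H.subtype).exists_le_sylow
  obtain ⟨c, rfl⟩ := MulAction.exists_smul_eq G P R
  -- `c Q c⁻¹` is the subgroup of order `p` of the cyclic group `K`, so `H` normalizes it.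
  set φ := MulAut.conj c
  have : IsCyclic (c • P : Sylow p G) := isCyclic_of_surjective _ (P.equivSMul c).surjective
  have : IsCyclic (K.map H.subtype) := isCyclic_of_le hKR
  have : IsCyclic K := (K.equivMapOfInjective _ H.subtype_injective).isCyclic.2 this
  have hQK : Q.map φ.toMonoidHom ≤ K.map H.subtype := by
    refine le_of_card_dvd_of_le_isCyclic hKR
      (by rw [Sylow.coe_subgroup_smul]; exact map_mono hQP) ?_
    rw [card_map_of_injective φ.injective, hQcard, card_map_of_injective H.subtype_injective]
    exact (hKp.card_eq_or_dvd).resolve_left fun h => hKbot (card_eq_one.1 h)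
  have hHN : H ≤ normalizer (Q.map φ.toMonoidHom : Set G) := by
    refine le_trans ?_ (normalizer_le_normalizer_of_le_isCyclic hQK)
    rw [← normal_subgroupOf_iff_le_normalizer (map_subtype_le K), subgroupOf,
      comap_map_eq_self_of_injective H.subtype_injective]
    exact hK
  rw [← map_equiv_normalizer_eq, hN, Subgroup.map_sup, MonoidHom.map_closure,
    Set.image_singleton] at hHN
  have : IsMulCommutative (centralizer (Q : Set G)) := isMulCommutative_iff_of_setLike.2 habel
  exact isCyclic_or_dihedral_of_le_sup_closure hp (by rw [← map_mul, ← sq, hτ2, map_one])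
    (Inverts.map hinv _) hHN hKp hKidx hKbot

theorem stmt8 {G : Type*} [Group G] [Finite G] (p : ℕ) [Fact p.Prime] (hp : Odd p)
    (P : Sylow p G) (hP : IsCyclic (P : Subgroup G))
    (Q : Subgroup G) (hQP : Q ≤ P) (hQcard : Nat.card Q = p)
    (τ : G) (hτ1 : τ ≠ 1) (hτ2 : τ ^ 2 = 1)
    (habel : ∀ a ∈ Subgroup.centralizer (Q : Set G), ∀ b ∈ Subgroup.centralizer (Q : Set G),
      a * b = b * a)
    (hinv : ∀ a ∈ Subgroup.centralizer (Q : Set G), τ * a * τ⁻¹ = a⁻¹)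
    (hN : Subgroup.normalizer (Q : Set G) = Subgroup.centralizer (Q : Set G) ⊔ Subgroup.closure {τ}) :
    ∀ H : Subgroup G, IsCyclicByP p H →
      IsCyclic H ∨ ∃ n : ℕ, 1 ≤ n ∧ Nonempty (H ≃* DihedralGroup (p ^ n)) :=
  stmt8_general p hp P hP Q hQP hQcard τ hτ2 habel hinv hN
end

section
/- Let G be a finite group such that every cyclic-by-2 subgroup of G is cyclic, a dihedral 2-group, or isomorphic to A₄. If a Sylow 2-subgroup P of G is dihedral (not cyclic), then C_G(K) = K for every elementary abelian subgroup K ≤ P of order 4. -/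
/-! If `c` centralizes the Klein four-group `K`, then `⟨K, c⟩` is abelian, hence cyclic-by-2
(its Sylow 2-subgroup contains `K`, and `c` generates the quotient). By hypothesis it is then
cyclic, a dihedral 2-group or `A₄`. It is not cyclic since it contains `K`, and not `A₄` since it
is abelian; an abelian dihedral group has order at most 4, so `⟨K, c⟩ = K` and `c ∈ K`. -/

open Subgroup

section CyclicByP

variable {p : ℕ} [Fact p.Prime] {H : Type*} [Group H] [Finite H]

theorem isCyclicByP_of_sylow_sup_zpowers_eq_top (T : Sylow p H) [(T : Subgroup H).Normal]
    {c : H} (hc : (T : Subgroup H) ⊔ zpowers c = ⊤) : IsCyclicByP p H := by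
  refine ⟨T, inferInstance, T.isPGroup',
    ((Nat.Prime.coprime_iff_not_dvd Fact.out).2 T.not_dvd_index).symm, c, fun h => ?_⟩
  have hle : (T : Subgroup H) ⊔ zpowers c ≤
      (zpowers (c : H ⧸ (T : Subgroup H))).comap (QuotientGroup.mk' T) :=
    sup_le ((QuotientGroup.ker_mk' _).symm.le.trans (ker_le_comap _ _))
      (map_le_iff_le_comap.1 (MonoidHom.map_zpowers _ _).le)
  obtain ⟨n, hn⟩ := mem_zpowers_iff.1 (hle (hc ▸ mem_top h))
  have hn : ((c ^ n : H) : H ⧸ (T : Subgroup H)) = h := by simpa using hn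
  exact ⟨n, Normal.mem_comm inferInstance (by simpa using inv_mem (QuotientGroup.eq.1 hn))⟩

theorem isCyclicByP_of_isPGroup_sup_zpowers_eq_top [IsMulCommutative H] {K : Subgroup H}
    (hK : IsPGroup p K) {c : H} (hc : K ⊔ zpowers c = ⊤) : IsCyclicByP p H := by
  obtain ⟨T, hKT⟩ := hK.exists_le_sylow
  exact isCyclicByP_of_sylow_sup_zpowers_eq_top T (top_le_iff.1 (hc ▸ sup_le_sup_right hKT _))

end CyclicByP

theorem IsKleinFour.of_card_eq_four_of_sq_eq_one {K : Type*} [Group K] (hcard : Nat.card K = 4)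
    (hsq : ∀ x : K, x ^ 2 = 1) : IsKleinFour K := by
  refine ⟨hcard, ((Nat.dvd_prime Nat.prime_two).1
    (Monoid.exponent_dvd_of_forall_pow_eq_one hsq)).resolve_left fun h => ?_⟩
  have := Monoid.exp_eq_one_iff.1 h
  simp at hcard

theorem DihedralGroup.nat_card_le_four_of_isMulCommutative {n : ℕ}
    [IsMulCommutative (DihedralGroup n)] : Nat.card (DihedralGroup n) ≤ 4 := by
  rcases DihedralGroup.commutative_iff.1 ‹_› with rfl | rfl <;>
    simp only [DihedralGroup.nat_card] <;> norm_num

theorem nat_card_le_four_of_dihedral_or_alternating {H : Type*} [Group H] [IsMulCommutative H]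
    (h : (∃ n : ℕ, Nonempty (H ≃* DihedralGroup (2 ^ n))) ∨
      Nonempty (H ≃* alternatingGroup (Fin 4))) : Nat.card H ≤ 4 := by
  rcases h with ⟨n, ⟨e⟩⟩ | ⟨⟨e⟩⟩
  · have := e.surjective.mul_comm (f := e.toMulHom) ‹_›
    exact (Nat.card_congr e.toEquiv).trans_le DihedralGroup.nat_card_le_four_of_isMulCommutative
  · have := e.surjective.mul_comm (f := e.toMulHom) ‹_›
    simp [alternatingGroup.isMulCommutative_iff_card_le_three] at this

namespace Subgroup

variable {G : Type*} [Group G]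

theorem isMulCommutative_sup_zpowers {K : Subgroup G} [IsMulCommutative K] {c : G}
    (hc : c ∈ centralizer (K : Set G)) : IsMulCommutative ↥(K ⊔ zpowers c) := by
  rw [zpowers_eq_closure, ← closure_eq K, ← closure_union]
  refine isMulCommutative_closure ?_
  rintro x (hx | rfl) y (hy | rfl)
  · exact setLike_mul_comm hx hy
  · exact hc x hx
  · exact (hc y hy).symm
  · rfl

theorem subgroupOf_sup_zpowers_eq_top (K : Subgroup G) (c : G) :
    K.subgroupOf (K ⊔ zpowers c) ⊔ zpowers ⟨c, mem_sup_right (mem_zpowers c)⟩ = ⊤ := by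
  refine map_injective (K ⊔ zpowers c).subtype_injective ?_
  simp [map_sup, subgroupOf_map_subtype, MonoidHom.map_zpowers, ← MonoidHom.range_eq_map]

end Subgroup

theorem mem_of_mem_centralizer_of_isKleinFour {G : Type*} [Group G] [Finite G]
    (hG : ∀ H : Subgroup G, IsCyclicByP 2 H →
      IsCyclic H ∨ (∃ n : ℕ, Nonempty (H ≃* DihedralGroup (2 ^ n))) ∨
        Nonempty (H ≃* alternatingGroup (Fin 4)))
    {K : Subgroup G} [IsKleinFour K] {c : G} (hc : c ∈ centralizer (K : Set G)) : c ∈ K := by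
  have := IsKleinFour.isMulCommutative (G := K)
  have := isMulCommutative_sup_zpowers hc
  have hKH : K ≤ K ⊔ zpowers c := le_sup_left
  have hK : IsPGroup 2 (K.subgroupOf (K ⊔ zpowers c)) :=
    (IsPGroup.of_card (n := 2) (by simp)).of_equiv (subgroupOfEquivOfLe hKH).symm
  rcases hG _ (isCyclicByP_of_isPGroup_sup_zpowers_eq_top hK (subgroupOf_sup_zpowers_eq_top K c))
    with _ | hH
  · exact absurd (isCyclic_of_le hKH) IsKleinFour.not_isCyclic
  · rw [eq_of_le_of_card_ge hKH (by simpa using nat_card_le_four_of_dihedral_or_alternating hH)]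
    exact mem_sup_right (mem_zpowers c)

theorem stmt12_general {G : Type*} [Group G] [Finite G]
    (hG : ∀ H : Subgroup G, IsCyclicByP 2 H →
      IsCyclic H ∨ (∃ n : ℕ, Nonempty (H ≃* DihedralGroup (2 ^ n))) ∨
        Nonempty (H ≃* alternatingGroup (Fin 4)))
    (P : Sylow 2 G) :
    ∀ K : Subgroup G, K ≤ P → Nat.card K = 4 → (∀ x ∈ K, x ^ 2 = 1) →
      Subgroup.centralizer (K : Set G) = K := by
  intro K _ hK4 hK2
  have : IsKleinFour K :=
    .of_card_eq_four_of_sq_eq_one hK4 fun x => Subtype.ext (hK2 x x.2)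
  exact le_antisymm (fun c hc => mem_of_mem_centralizer_of_isKleinFour hG hc)
    (le_centralizer_iff_isMulCommutative.2 IsKleinFour.isMulCommutative)

theorem stmt12 {G : Type*} [Group G] [Finite G]
    (hG : ∀ H : Subgroup G, IsCyclicByP 2 H →
      IsCyclic H ∨ (∃ n : ℕ, Nonempty (H ≃* DihedralGroup (2 ^ n))) ∨
        Nonempty (H ≃* alternatingGroup (Fin 4)))
    (P : Sylow 2 G)
    (hPd : ∃ n : ℕ, Nonempty ((P : Subgroup G) ≃* DihedralGroup (2 ^ n)))
    (hPnc : ¬ IsCyclic (P : Subgroup G)) :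
    ∀ K : Subgroup G, K ≤ P → Nat.card K = 4 → (∀ x ∈ K, x ^ 2 = 1) →
      Subgroup.centralizer (K : Set G) = K :=
  stmt12_general hG P
end
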